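/- arXiv:2601.09657 — 2 statements merged into one kernel-verified Lean document; each statement's English description precedes it below -/
import Mathlib

section
/- Let ε > 0, let n ≥ 1 be an integer, h = 1/n, x_i = i·h, and let u : [0,1] → ℝ be continuously differentiable. Set a_i := (1/h)·∫_{x_{i−1}}^{x_i} u(x) dx for i = 1, …, n and ū := ∫_0^1 u(x) dx. Then ε²·∫_0^1 u'(x)² dx + ∫_0^1 u(x)² dx − ū² ≤ (1 + (h/(π·ε))²) · ( ε²·∫_0^1 u'(x)² dx + (1/n)·Σ_{i=1}^n a_i² − ū² ). -/
/-!
On a cell of width `h`, `u - a_i` has mean zero, so the sharp Poincaré inequality bounds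
`∫_cell u² - h a_i²` by `(h/π)² ∫_cell u'²`. Summing over the cells gives
`∫ u² ≤ h Σ a_i² + (h/π)² ∫ u'²`, while Cauchy–Schwarz gives `ū² ≤ h Σ a_i²`; the claim is a
rearrangement of these two bounds. The Poincaré inequality on `[a, b]` is Wirtinger's inequality
(Parseval's identity, together with `ĝ(n) = (b - a)/(2πin) · ĝ'(n)`) applied to the reflection of
the function across `a`, which is continuous and periodic of period `2 (b - a)`.
-/

open MeasureTheory intervalIntegral Set Real

theorem ContinuousOn.memLp_of_isCompact {α E : Type*} [TopologicalSpace α] [MeasurableSpace α]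
    [OpensMeasurableSpace α] [T2Space α] [NormedAddCommGroup E] [SecondCountableTopologyEither α E]
    {μ : Measure α} [IsFiniteMeasureOnCompacts μ]
    {s : Set α} {f : α → E} (p : ENNReal) (hs : IsCompact s) (hf : ContinuousOn f s) :
    MemLp f p (μ.restrict s) := by
  have := isFiniteMeasure_restrict.2 (hs.measure_lt_top (μ := μ)).ne
  obtain ⟨C, hC⟩ := hs.exists_bound_of_continuousOn hf
  exact MemLp.of_bound (hf.aestronglyMeasurable hs.measurableSet) C
    (ae_restrict_of_forall_mem hs.measurableSet hC)

theorem wirtinger_inequality {a b : ℝ} (hab : a < b) {g g' : ℝ → ℂ}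
    (hg : ContinuousOn g (Icc a b)) (hper : g a = g b)
    (hderiv : ∀ x ∈ Ioo a b, HasDerivWithinAt g (g' x) (Ioi x) x)
    (hg' : MemLp g' 2 (volume.restrict (Ioc a b))) (hmean : ∫ x in a..b, g x = 0) :
    ∫ x in a..b, ‖g x‖ ^ 2 ≤ ((b - a) / (2 * π)) ^ 2 * ∫ x in a..b, ‖g' x‖ ^ 2 := by
  have hba : 0 < b - a := sub_pos.2 hab
  have hgL2 : MemLp g 2 (volume.restrict (Ioc a b)) :=
    (hg.memLp_of_isCompact (μ := volume) 2 isCompact_Icc).mono_measure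
      (Measure.restrict_mono Ioc_subset_Icc_self le_rfl)
  have hcoeff : ∀ n : ℤ, ‖fourierCoeffOn hab g n‖ ^ 2
      ≤ ((b - a) / (2 * π)) ^ 2 * ‖fourierCoeffOn hab g' n‖ ^ 2 := by
    intro n
    rcases eq_or_ne n 0 with rfl | hn
    · simp only [fourierCoeffOn_eq_integral, neg_zero, fourier_zero, one_smul, hmean, smul_zero,
        norm_zero, zero_pow two_ne_zero]
      positivity
    -- integration by parts; the boundary term vanishes by periodicity
    have hibp := fourierCoeffOn_of_hasDeriv_right hab hn (by rwa [uIcc_of_le hab.le])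
      (by rwa [min_eq_left hab.le, max_eq_right hab.le])
      ((intervalIntegrable_iff_integrableOn_Ioc_of_le hab.le).2 (hg'.integrable one_le_two))
    rw [hper, sub_self, mul_zero, zero_sub] at hibp
    have hnorm : ‖fourierCoeffOn hab g n‖
        = (b - a) / (2 * π * |(n : ℝ)|) * ‖fourierCoeffOn hab g' n‖ := by
      rw [hibp, norm_mul, norm_neg, norm_mul, ← Complex.ofReal_sub, Complex.norm_real,
        norm_div, norm_one]
      simp only [norm_mul, norm_neg, Complex.norm_ofNat, Complex.norm_real, Complex.norm_I,
        Complex.norm_intCast, Real.norm_eq_abs, abs_of_pos pi_pos, abs_of_pos hba]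
      field_simp
    have hn1 : (1 : ℝ) ≤ |(n : ℝ)| := by exact_mod_cast Int.one_le_abs hn
    have hle : ‖fourierCoeffOn hab g n‖ ≤ (b - a) / (2 * π) * ‖fourierCoeffOn hab g' n‖ := by
      rw [hnorm]
      gcongr (b - a) / ?_ * _
      exact le_mul_of_one_le_right (by positivity) hn1
    calc ‖fourierCoeffOn hab g n‖ ^ 2 ≤ ((b - a) / (2 * π) * ‖fourierCoeffOn hab g' n‖) ^ 2 := by
          gcongr
      _ = _ := mul_pow _ _ _
  have hparseval := hasSum_le hcoeff (hasSum_sq_fourierCoeffOn hab hgL2)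
    ((hasSum_sq_fourierCoeffOn hab hg').mul_left _)
  rw [smul_eq_mul, smul_eq_mul, mul_left_comm] at hparseval
  exact le_of_mul_le_mul_left hparseval (inv_pos.2 hba)

theorem mapsTo_fold_Icc {a b : ℝ} : MapsTo (fun x => a + |x - a|) (Icc (2 * a - b) b) (Icc a b) :=
  fun x hx => ⟨le_add_of_nonneg_right (abs_nonneg _),
    by rw [← le_sub_iff_add_le', abs_sub_le_iff]; constructor <;> linarith [hx.1, hx.2]⟩

theorem integral_comp_fold {a b : ℝ} (hab : a ≤ b) {φ : ℝ → ℝ} (hφ : ContinuousOn φ (Icc a b)) :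
    ∫ x in (2 * a - b)..b, φ (a + |x - a|) = 2 * ∫ x in a..b, φ x := by
  have hcont : ContinuousOn (fun x => φ (a + |x - a|)) (Icc (2 * a - b) b) :=
    hφ.comp (by fun_prop) mapsTo_fold_Icc
  rw [← integral_add_adjacent_intervals (b := a)
    ((hcont.mono (Icc_subset_Icc_right hab)).intervalIntegrable_of_Icc (by linarith))
    ((hcont.mono (Icc_subset_Icc_left (by linarith))).intervalIntegrable_of_Icc hab)]
  have hleft : ∫ x in (2 * a - b)..a, φ (a + |x - a|) = ∫ x in a..b, φ x := by
    rw [integral_congr (g := fun x => φ (2 * a - x)), integral_comp_sub_left]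
    · ring_nf
    · intro x hx
      rw [uIcc_of_le (by linarith)] at hx
      simp only [abs_of_nonpos (sub_nonpos.2 hx.2)]
      ring_nf
  have hright : ∫ x in a..b, φ (a + |x - a|) = ∫ x in a..b, φ x := by
    refine integral_congr fun x hx => ?_
    rw [uIcc_of_le hab] at hx
    simp only [abs_of_nonneg (sub_nonneg.2 hx.1), add_sub_cancel]
  rw [hleft, hright, two_mul]

theorem poincare_inequality {a b : ℝ} (hab : a < b) {f f' : ℝ → ℝ}
    (hf : ∀ x ∈ Icc a b, HasDerivWithinAt f (f' x) (Icc a b) x)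
    (hf' : ContinuousOn f' (Icc a b)) (hmean : ∫ x in a..b, f x = 0) :
    ∫ x in a..b, f x ^ 2 ≤ ((b - a) / π) ^ 2 * ∫ x in a..b, f' x ^ 2 := by
  -- Wirtinger's inequality for the even reflection of `f` about `a`, of period `2 (b - a)`
  set ρ : ℝ → ℝ := fun x => a + |x - a| with hρ
  have hρ_left : ∀ x ≤ a, ρ x = 2 * a - x := fun x hx => by
    simp only [hρ, abs_of_nonpos (sub_nonpos.2 hx)]; ring
  have hρ_right : ∀ x ≥ a, ρ x = x := fun x hx => by
    simp only [hρ, abs_of_nonneg (sub_nonneg.2 hx), add_sub_cancel]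
  have hfc : ContinuousOn f (Icc a b) := fun x hx => (hf x hx).continuousWithinAt
  have hf'ρ : ContinuousOn (fun x => (f' (ρ x) : ℂ)) (Icc (2 * a - b) b) :=
    Complex.continuous_ofReal.comp_continuousOn (hf'.comp (by fun_prop) mapsTo_fold_Icc)
  set g : ℝ → ℂ := fun x => (f (ρ x) : ℂ)
  set g' : ℝ → ℂ := fun x => if x < a then -(f' (ρ x) : ℂ) else (f' (ρ x) : ℂ) with hg'
  have hg'_norm : ∀ x, ‖g' x‖ = ‖(f' (ρ x) : ℂ)‖ := fun x => by
    simp only [hg']; split_ifs <;> simp only [norm_neg]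
  have hderiv : ∀ x ∈ Ioo (2 * a - b) b, HasDerivWithinAt g (g' x) (Ioi x) x := by
    rintro x ⟨hAx, hxb⟩
    rcases lt_or_ge x a with hxa | hax
    · have hf_at : HasDerivAt f (f' (2 * a - x)) (2 * a - x) :=
        (hf _ ⟨by linarith, by linarith⟩).hasDerivAt (Icc_mem_nhds (by linarith) (by linarith))
      have hgx : g' x = -(f' (ρ x) : ℂ) := if_pos hxa
      rw [hgx, hρ_left x hxa.le, ← Complex.ofReal_neg]
      refine ((hf_at.comp_const_sub _ _).ofReal_comp.congr_of_eventuallyEq ?_).hasDerivWithinAt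
      filter_upwards [Iio_mem_nhds hxa] with y hy
      simp only [g, hρ_left y (le_of_lt hy)]
    · have hgx : g' x = (f' (ρ x) : ℂ) := if_neg (not_lt.2 hax)
      rw [hgx, hρ_right x hax]
      refine (((hf x ⟨hax, hxb.le⟩).mono_of_mem_nhdsWithin
        (Icc_mem_nhdsGT_of_mem ⟨hax, hxb⟩)).ofReal_comp).congr (fun y hy => ?_) ?_
      · simp only [g, hρ_right y (hax.trans (le_of_lt hy))]
      · simp only [g, hρ_right x hax]
  have hg'L2 : MemLp g' 2 (volume.restrict (Ioc (2 * a - b) b)) := by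
    refine MemLp.of_le ((hf'ρ.memLp_of_isCompact (μ := volume) 2 isCompact_Icc).mono_measure
      (Measure.restrict_mono Ioc_subset_Icc_self le_rfl)) ?_
      (ae_of_all _ fun x => (hg'_norm x).le)
    rw [← Ioo_union_Icc_eq_Ioc (by linarith) hab.le, aestronglyMeasurable_union_iff]
    constructor
    · refine ((hf'ρ.neg.mono (Ioo_subset_Icc_self.trans (Icc_subset_Icc_right hab.le))).congr
        fun x hx => if_pos hx.2).aestronglyMeasurable measurableSet_Ioo
    · refine ((hf'ρ.mono (Icc_subset_Icc_left (by linarith))).congr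
        fun x hx => if_neg (not_lt.2 hx.1)).aestronglyMeasurable measurableSet_Icc
  have hgc : ContinuousOn g (Icc (2 * a - b) b) :=
    Complex.continuous_ofReal.comp_continuousOn (hfc.comp (by fun_prop) mapsTo_fold_Icc)
  have hper : g (2 * a - b) = g b := by
    simp only [g, hρ_left _ (by linarith : 2 * a - b ≤ a), hρ_right b hab.le]; ring_nf
  have hgmean : ∫ x in (2 * a - b)..b, g x = 0 := by
    rw [integral_ofReal, integral_comp_fold hab.le hfc, hmean, mul_zero, Complex.ofReal_zero]
  have hW := wirtinger_inequality (by linarith) hgc hper hderiv hg'L2 hgmean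
  simp only [g, hg'_norm, Complex.norm_real, Real.norm_eq_abs, sq_abs] at hW
  rw [integral_comp_fold (φ := fun x => f x ^ 2) hab.le (hfc.pow 2),
    integral_comp_fold (φ := fun x => f' x ^ 2) hab.le (hf'.pow 2),
    show (b - (2 * a - b)) / (2 * π) = (b - a) / π by field_simp; ring] at hW
  linarith

theorem integral_sq_le_mul_sq_average_add {a b : ℝ} (hab : a < b) {u u' : ℝ → ℝ}
    (hu : ∀ x ∈ Icc a b, HasDerivWithinAt u (u' x) (Icc a b) x)
    (hu' : ContinuousOn u' (Icc a b)) :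
    ∫ x in a..b, u x ^ 2 ≤ (b - a) * (1 / (b - a) * ∫ x in a..b, u x) ^ 2
      + ((b - a) / π) ^ 2 * ∫ x in a..b, u' x ^ 2 := by
  set c := 1 / (b - a) * ∫ x in a..b, u x with hc
  have huc : ContinuousOn u (Icc a b) := fun x hx => (hu x hx).continuousWithinAt
  have hint : ∀ {φ : ℝ → ℝ}, ContinuousOn φ (Icc a b) → IntervalIntegrable φ volume a b :=
    fun hφ => hφ.intervalIntegrable_of_Icc hab.le
  have hIu : ∫ x in a..b, u x = (b - a) * c := by
    rw [hc]; field_simp [(sub_pos.2 hab).ne']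
  have hmean : ∫ x in a..b, (u x - c) = 0 := by
    rw [integral_sub (hint huc) intervalIntegrable_const, intervalIntegral.integral_const, hIu,
      smul_eq_mul, sub_self]
  have hvar : ∫ x in a..b, (u x - c) ^ 2 = (∫ x in a..b, u x ^ 2) - (b - a) * c ^ 2 := by
    have hexpand : ∀ x, (u x - c) ^ 2 = (u x ^ 2 - 2 * c * u x) + c ^ 2 := fun x => by ring
    simp only [hexpand]
    rw [integral_add (hint (by fun_prop)) intervalIntegrable_const,
      integral_sub (hint (by fun_prop)) (hint (by fun_prop)), intervalIntegral.integral_const_mul,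
      intervalIntegral.integral_const, hIu, smul_eq_mul]
    ring
  have hpoincare := poincare_inequality hab (fun x hx => (hu x hx).sub_const c) hu' hmean
  rw [hvar] at hpoincare
  linarith

theorem Finset.sum_Icc_one_eq_sum_range {M : Type*} [AddCommMonoid M] (n : ℕ) (f : ℕ → M) :
    ∑ i ∈ Finset.Icc 1 n, f i = ∑ k ∈ Finset.range n, f (k + 1) := by
  rw [Finset.range_eq_Ico, Finset.sum_Ico_add' f 0 n 1, zero_add, Finset.Ico_add_one_right_eq_Icc]

theorem Icc_mesh_subset {h : ℝ} (hh : 0 ≤ h) {n i : ℕ} (hi : i ∈ Finset.Icc 1 n) :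
    Icc (((i : ℝ) - 1) * h) (i * h) ⊆ Icc 0 (n * h) := by
  obtain ⟨hi1, hin⟩ := Finset.mem_Icc.1 hi
  have hi1' : (1 : ℝ) ≤ i := by exact_mod_cast hi1
  have hin' : (i : ℝ) ≤ n := by exact_mod_cast hin
  exact Icc_subset_Icc (by nlinarith) (by nlinarith)

theorem sum_integral_mesh {h : ℝ} (hh : 0 ≤ h) (n : ℕ) {φ : ℝ → ℝ}
    (hφ : IntervalIntegrable φ volume 0 (n * h)) :
    ∑ i ∈ Finset.Icc 1 n, ∫ x in ((i : ℝ) - 1) * h..(i : ℝ) * h, φ x = ∫ x in 0..n * h, φ x := by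
  have hcell : ∀ k < n, IntervalIntegrable φ volume (k * h) ((k + 1 : ℕ) * h) := by
    intro k hk
    have hsub := Icc_mesh_subset hh (Finset.mem_Icc.2 ⟨Nat.le_add_left 1 k, hk⟩)
    push_cast at hsub
    rw [add_sub_cancel_right] at hsub
    refine hφ.mono_set ?_
    rw [uIcc_of_le (show (0 : ℝ) ≤ n * h by positivity),
      uIcc_of_le (show (k : ℝ) * h ≤ (k + 1 : ℕ) * h by gcongr; simp)]
    exact_mod_cast hsub
  simpa [Finset.sum_Icc_one_eq_sum_range] using sum_integral_adjacent_intervals hcell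

/-- The cell mean `a_i`. -/
noncomputable def cellAverage (u : ℝ → ℝ) (h : ℝ) (i : ℕ) : ℝ :=
  (1 / h) * ∫ x in (((i : ℝ) - 1) * h)..((i : ℝ) * h), u x

theorem integral_sq_le_sum_cellAverage_sq {h : ℝ} (hh : 0 < h) (n : ℕ) {u u' : ℝ → ℝ}
    (hu : ∀ x ∈ Icc 0 (n * h), HasDerivWithinAt u (u' x) (Icc 0 (n * h)) x)
    (hu' : ContinuousOn u' (Icc 0 (n * h))) :
    ∫ x in 0..n * h, u x ^ 2 ≤
      h * ∑ i ∈ Finset.Icc 1 n, cellAverage u h i ^ 2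
        + (h / π) ^ 2 * ∫ x in 0..n * h, u' x ^ 2 := by
  have huc : ContinuousOn u (Icc 0 (n * h)) := fun x hx => (hu x hx).continuousWithinAt
  have hnh : (0 : ℝ) ≤ n * h := by positivity
  rw [← sum_integral_mesh hh.le n (φ := fun x => u x ^ 2)
      ((huc.pow 2).intervalIntegrable_of_Icc hnh),
    ← sum_integral_mesh hh.le n (φ := fun x => u' x ^ 2)
      ((hu'.pow 2).intervalIntegrable_of_Icc hnh),
    Finset.mul_sum, Finset.mul_sum, ← Finset.sum_add_distrib]
  refine Finset.sum_le_sum fun i hi => ?_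
  have hsub := Icc_mesh_subset hh.le hi
  have hcell := integral_sq_le_mul_sq_average_add (by linarith)
    (fun x hx => (hu x (hsub hx)).mono hsub) (hu'.mono hsub)
  rwa [show (i : ℝ) * h - ((i : ℝ) - 1) * h = h by ring] at hcell

theorem sq_integral_le_sum_cellAverage_sq {h : ℝ} (hh : 0 < h) (n : ℕ) {u : ℝ → ℝ}
    (hu : IntervalIntegrable u volume 0 (n * h)) :
    (∫ x in 0..n * h, u x) ^ 2 ≤ n * h * (h * ∑ i ∈ Finset.Icc 1 n, cellAverage u h i ^ 2) := by
  have hsum : ∫ x in 0..n * h, u x = h * ∑ i ∈ Finset.Icc 1 n, cellAverage u h i := by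
    rw [← sum_integral_mesh hh.le n hu, Finset.mul_sum]
    refine Finset.sum_congr rfl fun i _ => ?_
    rw [cellAverage, ← mul_assoc, mul_one_div_cancel hh.ne', one_mul]
  have hcs := sq_sum_le_card_mul_sum_sq (s := Finset.Icc 1 n) (f := cellAverage u h)
  rw [Nat.card_Icc, Nat.add_sub_cancel] at hcs
  rw [hsum, mul_pow]
  calc h ^ 2 * (∑ i ∈ Finset.Icc 1 n, cellAverage u h i) ^ 2
      ≤ h ^ 2 * (n * ∑ i ∈ Finset.Icc 1 n, cellAverage u h i ^ 2) := by gcongr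
    _ = n * h * (h * ∑ i ∈ Finset.Icc 1 n, cellAverage u h i ^ 2) := by ring

/-- Comparison of the continuous and discrete optimal trial norms:
`ε²∫(u')² + ∫u² − ū² ≤ (1 + (h/(πε))²)·(ε²∫(u')² + (1/n)Σ a_i² − ū²)`. -/
theorem stmt_4 (ε : ℝ) (hε : 0 < ε) (n : ℕ) (hn : 1 ≤ n) (u u' : ℝ → ℝ)
    (hu : ∀ x ∈ Set.Icc (0:ℝ) 1, HasDerivWithinAt u (u' x) (Set.Icc 0 1) x)
    (hu' : ContinuousOn u' (Set.Icc 0 1)) :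
    let h : ℝ := 1 / n
    let ubar : ℝ := ∫ x in (0:ℝ)..1, u x
    ε ^ 2 * (∫ x in (0:ℝ)..1, (u' x) ^ 2) + (∫ x in (0:ℝ)..1, (u x) ^ 2) - ubar ^ 2
      ≤ (1 + (h / (Real.pi * ε)) ^ 2) *
        (ε ^ 2 * (∫ x in (0:ℝ)..1, (u' x) ^ 2) +
          (1 / (n : ℝ)) * (∑ i ∈ Finset.Icc 1 n,
            ((1 / h) * ∫ x in (((i : ℝ) - 1) * h)..((i : ℝ) * h), u x) ^ 2) - ubar ^ 2) := by
  intro h ubar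
  have hh : 0 < h := one_div_pos.2 (Nat.cast_pos.2 hn)
  have hnh : (n : ℝ) * h = 1 := mul_one_div_cancel (Nat.cast_pos.2 hn).ne'
  rw [← hnh] at hu hu'
  have hsq := integral_sq_le_sum_cellAverage_sq hh n hu hu'
  have hmean := sq_integral_le_sum_cellAverage_sq hh n
    (ContinuousOn.intervalIntegrable_of_Icc (by positivity)
      fun x hx => (hu x hx).continuousWithinAt)
  rw [hnh] at hsq
  rw [hnh, one_mul] at hmean
  show _ ≤ _ * (_ + h * ∑ i ∈ Finset.Icc 1 n, cellAverage u h i ^ 2 - _)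
  set D := h * ∑ i ∈ Finset.Icc 1 n, cellAverage u h i ^ 2
  set X := ∫ x in (0:ℝ)..1, u' x ^ 2
  have hexpand : (1 + (h / (π * ε)) ^ 2) * (ε ^ 2 * X + D - ubar ^ 2)
      = ε ^ 2 * X + D - ubar ^ 2 + (h / π) ^ 2 * X + (h / (π * ε)) ^ 2 * (D - ubar ^ 2) := by
    field_simp
    ring
  rw [hexpand]
  linarith [mul_nonneg (sq_nonneg (h / (π * ε))) (sub_nonneg.2 hmean)]
end

section
/- Fix ε > 0 and an integer n ≥ 2, let h = 1/n and x_j = j·h. Let u(x) := x − (e^{x/ε} − 1)/(e^{1/ε} − 1) and let I_h u : [0,1] → ℝ be its piecewise linear interpolant: the continuous function that is linear on each [x_{j−1}, x_j] with I_h u(x_j) = u(x_j) for all j. Then the interpolation error restricted to [0, 1−h] satisfies Σ_{j=1}^{n−1} ∫_{x_{j−1}}^{x_j} (u'(x) − (I_h u)'(x))² dx = ((e^{−2h/ε} − e^{−2/ε})/(1 − e^{−2/ε})) · Σ_{j=1}^n ∫_{x_{j−1}}^{x_j} (u'(x) − (I_h u)'(x))² dx, where (I_h u)' is the constant slope (u(x_j)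 − u(x_{j−1}))/h on each subinterval. -/
/-!
Interpolation reproduces the linear part of `u`, so on a cell `[a, a + h]` the error
`u' - (I_h u)'` only sees the exponential: it is `-(e^{x/ε}/ε - (e^{(a+h)/ε} - e^{a/ε})/h) / D`
with `D = e^{1/ε} - 1`. Translating the cell by `s` multiplies this by `e^{s/ε}`, so the squared
cell errors form a geometric sequence with ratio `r = e^{2h/ε}`. The error on the first `m` cells
is therefore proportional to `(r^m - 1)/(r - 1)`, and the quotient of the sums for `m = n - 1` and
`m = n` is `(r^{n-1} - 1)/(r^n - 1) = (r⁻¹ - r⁻ⁿ)/(1 - r⁻ⁿ)`, where `r⁻ⁿ = e^{-2/ε}` as `nh = 1`.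
-/

open intervalIntegral Real

noncomputable def cellError (u : ℝ → ℝ) (h a : ℝ) : ℝ :=
  ∫ x in a..a + h, (deriv u x - (u (a + h) - u a) / h) ^ 2

noncomputable def boundaryLayer (ε D x : ℝ) : ℝ := x - (exp (x / ε) - 1) / D

section BoundaryLayer

variable {ε : ℝ} (D : ℝ)

theorem hasDerivAt_boundaryLayer (x : ℝ) :
    HasDerivAt (boundaryLayer ε D) (1 - exp (x / ε) / (ε * D)) x := by
  refine ((hasDerivAt_id x).sub
    ((((hasDerivAt_id x).div_const ε).exp.sub_const 1).div_const D)).congr_deriv ?_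
  simp only [id]
  ring

theorem deriv_boundaryLayer_sub_slope (hε : ε ≠ 0) {h : ℝ} (hh : h ≠ 0) (a x : ℝ) :
    deriv (boundaryLayer ε D) x - (boundaryLayer ε D (a + h) - boundaryLayer ε D a) / h
      = ((exp ((a + h) / ε) - exp (a / ε)) / h - exp (x / ε) / ε) / D := by
  rw [(hasDerivAt_boundaryLayer D x).deriv, boundaryLayer, boundaryLayer]
  field_simp
  ring

theorem cellError_boundaryLayer_add (hε : ε ≠ 0) {h : ℝ} (hh : h ≠ 0) (a s : ℝ) :
    cellError (boundaryLayer ε D) h (a + s)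
      = exp (2 * s / ε) * cellError (boundaryLayer ε D) h a := by
  unfold cellError
  rw [show a + s + h = a + h + s by ring, ← integral_comp_add_right,
    ← intervalIntegral.integral_const_mul]
  refine integral_congr fun x _ => ?_
  have exp_shift (y : ℝ) : exp ((y + s) / ε) = exp (y / ε) * exp (s / ε) := by
    rw [add_div, exp_add]
  rw [show a + h + s = a + s + h by ring, deriv_boundaryLayer_sub_slope D hε hh,
    deriv_boundaryLayer_sub_slope D hε hh, show a + s + h = a + h + s by ring, exp_shift,
    exp_shift, exp_shift, show 2 * s / ε = s / ε + s / ε by ring, exp_add]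
  ring

theorem cellError_boundaryLayer_nat_mul (hε : ε ≠ 0) {h : ℝ} (hh : h ≠ 0) (k : ℕ) :
    cellError (boundaryLayer ε D) h (k * h)
      = exp (2 * h / ε) ^ k * cellError (boundaryLayer ε D) h 0 := by
  have := cellError_boundaryLayer_add D hε hh 0 (k * h)
  rw [zero_add] at this
  rw [this, ← exp_nat_mul]
  ring_nf

end BoundaryLayer

theorem geom_sum_eq_mul_geom_sum_succ {K : Type*} [Field K] {r : K} (hr : r ≠ 0)
    {m : ℕ} (hrm : r ^ (m + 1) ≠ 1) :
    ∑ i ∈ Finset.range m, r ^ i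
      = (r⁻¹ - (r ^ (m + 1))⁻¹) / (1 - (r ^ (m + 1))⁻¹) * ∑ i ∈ Finset.range (m + 1), r ^ i := by
  have hr1 : r ≠ 1 := by rintro rfl; simp at hrm
  have hr1' : r - 1 ≠ 0 := sub_ne_zero.mpr hr1
  have hrm' : r ^ (m + 1) - 1 ≠ 0 := sub_ne_zero.mpr hrm
  rw [geom_sum_eq hr1, geom_sum_eq hr1]
  field_simp
  ring

/-- The squared `H¹` seminorm interpolation error of
`u(x) = x − (e^{x/ε} − 1)/(e^{1/ε} − 1)` restricted to `[0, 1−h]` equals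
`((e^{−2h/ε} − e^{−2/ε})/(1 − e^{−2/ε}))` times the error on `[0,1]`. -/
theorem stmt_18 (ε : ℝ) (hε : 0 < ε) (n : ℕ) (hn : 2 ≤ n) :
    let h : ℝ := 1 / n
    let u : ℝ → ℝ := fun x => x - (Real.exp (x / ε) - 1) / (Real.exp (1 / ε) - 1)
    ∑ j ∈ Finset.Icc 1 (n - 1),
        (∫ x in (((j : ℝ) - 1) * h)..((j : ℝ) * h),
          (deriv u x - (u ((j : ℝ) * h) - u (((j : ℝ) - 1) * h)) / h) ^ 2)
      = ((Real.exp (-2 * h / ε) - Real.exp (-2 / ε)) / (1 - Real.exp (-2 / ε))) *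
          ∑ j ∈ Finset.Icc 1 n,
            (∫ x in (((j : ℝ) - 1) * h)..((j : ℝ) * h),
              (deriv u x - (u ((j : ℝ) * h) - u (((j : ℝ) - 1) * h)) / h) ^ 2) := by
  intro h u
  obtain ⟨m, rfl⟩ : ∃ m, n = m + 1 := ⟨n - 1, by omega⟩
  have hh : 0 < h := by positivity
  have hnh : ((m + 1 : ℕ) : ℝ) * h = 1 := mul_one_div_cancel (by positivity)
  set r := exp (2 * h / ε)
  have hsum (N : ℕ) : ∑ j ∈ Finset.Icc 1 N,
      (∫ x in (((j : ℝ) - 1) * h)..((j : ℝ) * h),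
        (deriv u x - (u ((j : ℝ) * h) - u (((j : ℝ) - 1) * h)) / h) ^ 2)
      = cellError u h 0 * ∑ i ∈ Finset.range N, r ^ i := by
    rw [← Finset.Ico_add_one_right_eq_Icc, Finset.sum_Ico_eq_sum_range, Finset.mul_sum,
      Nat.add_sub_cancel]
    refine Finset.sum_congr rfl fun i _ => ?_
    rw [show ((1 + i : ℕ) : ℝ) - 1 = i by push_cast; ring,
      show ((1 + i : ℕ) : ℝ) * h = i * h + h by push_cast; ring, mul_comm (cellError u h 0)]
    exact cellError_boundaryLayer_nat_mul _ hε.ne' hh.ne' i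
  have hexp_h : exp (-2 * h / ε) = r⁻¹ := by rw [← exp_neg]; ring_nf
  have hexp_one : exp (-2 / ε) = (r ^ (m + 1))⁻¹ := by
    rw [← exp_nat_mul, ← exp_neg]
    congr 1
    linear_combination (2 / ε) * hnh
  have hr : 1 < r := one_lt_exp_iff.mpr (by positivity)
  rw [hsum, hsum, Nat.add_sub_cancel, hexp_h, hexp_one,
    geom_sum_eq_mul_geom_sum_succ (by positivity) (one_lt_pow₀ hr m.succ_ne_zero).ne']
  ring
end
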